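/- Every matrix A ∈ h₂(E) with det(A) = 1 and tr(A) > 0 is of the form M M* for some 2×2 matrix M with entries in the Eisenstein integers and det(M) a unit of E of absolute value 1 — in particular A is positive definite and unimodular over E. -/

import Mathlib

open Complex Matrix

noncomputable def eisOmega : ℂ := Complex.exp (2 * Real.pi * I / 3)

noncomputable def eisSet : Set ℂ := {z : ℂ | ∃ a b : ℤ, z = a + b * eisOmega}

noncomputable def hermEis : Set (Matrix (Fin 2) (Fin 2) ℂ) :=
  {A | A.IsHermitian ∧ ∀ i j, A i j ∈ eisSet}

/-!
Write `A = !![a, b; b̄, d]` with `a, d ∈ ℤ` and `a d - |b|² = 1`; then `a, d > 0`. If `a = 1`,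
`A = L L*` with `L = !![1, 0; b̄, 1]`. Otherwise choose `q ∈ E` nearest to `b / a`: since every
point of `ℂ` lies within `√(7/16)` of `E`, the form takes at `(-q, 1)` a value `k` with
`k a = 1 + |b - q a|² < a²`, so `0 < k < a`, and the congruence `A = L A' L*` with
`L = !![0, 1; 1, q̄]` moves `k` into the corner. Induction on `a` concludes.
-/

open ComplexConjugate

lemma eisOmega_eq : eisOmega = -(1 / 2) + (√3 / 2 : ℝ) * I := by
  have h : 2 * Real.pi * I / 3 = ((Real.pi - Real.pi / 3 : ℝ) : ℂ) * I := by push_cast; ring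
  rw [eisOmega, h, exp_mul_I, ← ofReal_cos, ← ofReal_sin, Real.cos_pi_sub, Real.sin_pi_sub,
    Real.cos_pi_div_three, Real.sin_pi_div_three]
  push_cast
  ring

lemma eisOmega_re : eisOmega.re = -(1 / 2) := by simp [eisOmega_eq]

lemma eisOmega_im : eisOmega.im = √3 / 2 := by simp [eisOmega_eq]

lemma eisOmega_sq_add_eisOmega_add_one : eisOmega ^ 2 + eisOmega + 1 = 0 := by
  have h3 : ((√3 : ℝ) : ℂ) ^ 2 = 3 := by rw [← ofReal_pow, Real.sq_sqrt (by norm_num)]; simp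
  rw [eisOmega_eq]
  push_cast
  linear_combination I ^ 2 / 4 * h3 + 3 / 4 * I_sq

lemma conj_eisOmega : conj eisOmega = -1 - eisOmega := by
  apply Complex.ext <;> simp [eisOmega_re, eisOmega_im]; norm_num

def eisSubring : Subring ℂ where
  carrier := eisSet
  zero_mem' := ⟨0, 0, by simp⟩
  one_mem' := ⟨1, 0, by simp⟩
  add_mem' := by
    rintro _ _ ⟨a, b, rfl⟩ ⟨c, d, rfl⟩
    exact ⟨a + c, b + d, by push_cast; ring⟩
  neg_mem' := by
    rintro _ ⟨a, b, rfl⟩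
    exact ⟨-a, -b, by push_cast; ring⟩
  mul_mem' := by
    rintro _ _ ⟨a, b, rfl⟩ ⟨c, d, rfl⟩
    refine ⟨a * c - b * d, a * d + b * c - b * d, ?_⟩
    push_cast
    linear_combination (b * d : ℂ) * eisOmega_sq_add_eisOmega_add_one

lemma conj_mem_eisSubring {z : ℂ} (hz : z ∈ eisSubring) : conj z ∈ eisSubring := by
  obtain ⟨a, b, rfl⟩ := hz
  exact ⟨a - b, -b, by simp only [map_add, map_mul, map_intCast, conj_eisOmega]; push_cast; ring⟩

lemma exists_intCast_eq_of_mem_eisSubring {z : ℂ} (hz : z ∈ eisSubring) (hreal : conj z = z) :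
    ∃ n : ℤ, z = n := by
  obtain ⟨a, b, rfl⟩ := hz
  have him : (b : ℝ) * (√3 / 2) = 0 := by
    simpa [eisOmega_re, eisOmega_im] using conj_eq_iff_im.mp hreal
  have hb : b = 0 := by exact_mod_cast (mul_eq_zero.mp him).resolve_right (by positivity)
  exact ⟨a, by simp [hb]⟩

/-- Round `2 Im z / √3` to `n`, then `Re z + n / 2` to `m`: the real and imaginary parts of
`z - (m + n ω)` are then at most `1/2` and `√3/4` in absolute value. -/
lemma exists_mem_eisSubring_normSq_sub_le (z : ℂ) :
    ∃ q ∈ eisSubring, normSq (z - q) ≤ 7 / 16 := by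
  set n := round (2 * z.im / √3)
  set m := round (z.re + n / 2)
  refine ⟨m + n * eisOmega, ⟨m, n, rfl⟩, ?_⟩
  have h3 : √3 ^ 2 = 3 := Real.sq_sqrt (by norm_num)
  have hre : |z.re + n / 2 - m| ≤ 1 / 2 := abs_sub_round _
  have him : |z.im - n * (√3 / 2)| ≤ √3 / 4 := by
    have : z.im - n * (√3 / 2) = √3 / 2 * (2 * z.im / √3 - n) := by field_simp
    rw [this, abs_mul, abs_of_pos (by positivity)]
    linarith [mul_le_mul_of_nonneg_left (abs_sub_round (2 * z.im / √3))
      (by positivity : (0 : ℝ) ≤ √3 / 2)]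
  rw [normSq_apply]
  simp only [sub_re, sub_im, add_re, add_im, mul_re, mul_im, intCast_re, intCast_im,
    eisOmega_re, eisOmega_im]
  have h1 := sq_le_sq' (abs_le.mp hre).1 (abs_le.mp hre).2
  have h2 := sq_le_sq' (abs_le.mp him).1 (abs_le.mp him).2
  nlinarith

lemma Matrix.mul_apply_mem_of_forall_mem {R l m n : Type*} [Ring R] [Fintype m] (S : Subring R)
    {M : Matrix l m R} {N : Matrix m n R} (hM : ∀ i j, M i j ∈ S) (hN : ∀ i j, N i j ∈ S)
    (i : l) (j : n) : (M * N) i j ∈ S :=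
  S.sum_mem fun k _ => S.mul_mem (hM i k) (hN k j)

lemma Matrix.det_mem_of_forall_mem {R n : Type*} [CommRing R] [Fintype n] [DecidableEq n]
    (S : Subring R) {M : Matrix n n R} (hM : ∀ i j, M i j ∈ S) : M.det ∈ S :=
  M.det_apply ▸ S.sum_mem fun σ _ => by
    rw [Units.smul_def]
    exact zsmul_mem (S.prod_mem fun i _ => hM (σ i) i) _

lemma Matrix.of_fin_two_apply_mem {R : Type*} [Ring R] (S : Subring R) {w x y z : R}
    (hw : w ∈ S) (hx : x ∈ S) (hy : y ∈ S) (hz : z ∈ S) (i j : Fin 2) :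
    !![w, x; y, z] i j ∈ S := by
  fin_cases i <;> fin_cases j <;> assumption

/-- The new corner `d - q b* - q* b + a q q*` is the value of the hermitian form of
`!![a, b; b*, d]` at the vector `(-q, 1)`. -/
lemma fin_two_eq_mul_mul_conjTranspose {R : Type*} [CommRing R] [StarRing R] (a b d q : R)
    (ha : star a = a) :
    !![a, b; star b, d] = !![0, 1; 1, star q] *
      !![d - q * star b - star q * b + a * q * star q, star b - star q * a;
        star (star b - star q * a), a] * (!![0, 1; 1, star q])ᴴ := by
  ext i j
  fin_cases i <;> fin_cases j <;>
    simp [Matrix.mul_apply, Fin.sum_univ_two, ha] <;> ring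

lemma exists_lt_of_det_eq_one {a : ℕ} (ha : 2 ≤ a) {b : ℂ} (hb : b ∈ eisSubring) {d : ℤ}
    (hdet : a * d - b * conj b = 1) :
    ∃ q ∈ eisSubring, ∃ k : ℕ, 0 < k ∧ k < a ∧
      (k : ℂ) = d - q * conj b - conj q * b + a * q * conj q := by
  obtain ⟨q, hq, hround⟩ := exists_mem_eisSubring_normSq_sub_le (b / a)
  set D := (d : ℂ) - q * conj b - conj q * b + a * q * conj q with hD
  have hDmem : D ∈ eisSubring :=
    add_mem (sub_mem (sub_mem (intCast_mem _ d) (mul_mem hq (conj_mem_eisSubring hb)))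
      (mul_mem (conj_mem_eisSubring hq) hb))
      (mul_mem (mul_mem (natCast_mem _ a) hq) (conj_mem_eisSubring hq))
  have hDreal : conj D = D := by
    simp only [hD, map_add, map_sub, map_mul, map_intCast, map_natCast, conj_conj]
    ring
  obtain ⟨k, hk⟩ := exists_intCast_eq_of_mem_eisSubring hDmem hDreal
  have hka : (k : ℝ) * a = 1 + normSq (b - q * a) := by
    have : (k : ℂ) * a = ((1 + normSq (b - q * a) : ℝ) : ℂ) := by
      rw [← hk, ofReal_add, ← mul_conj]
      simp only [hD, map_sub, map_mul, map_natCast]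
      push_cast
      linear_combination hdet
    exact_mod_cast this
  have ha0 : (a : ℂ) ≠ 0 := by norm_cast; omega
  have hnorm : normSq (b - q * a) ≤ 7 / 16 * a ^ 2 := by
    have : b - q * a = (b / a - q) * a := by field_simp
    rw [this, normSq_mul, normSq_natCast]
    nlinarith [sq_nonneg (a : ℝ)]
  have ha2 : (2 : ℝ) ≤ a := by exact_mod_cast ha
  have hk0 : (0 : ℝ) < k := by nlinarith [normSq_nonneg (b - q * a)]
  have hka' : (k : ℝ) < a := by nlinarith
  lift k to ℕ using by exact_mod_cast hk0.le
  exact ⟨q, hq, k, by exact_mod_cast hk0, by exact_mod_cast hka', by rw [← hD, hk]; norm_cast⟩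

theorem exists_eq_mul_conjTranspose_of_det_eq_one {a : ℕ} (ha : 0 < a) {b : ℂ}
    (hb : b ∈ eisSubring) {d : ℤ} (hdet : a * d - b * conj b = 1) :
    ∃ M : Matrix (Fin 2) (Fin 2) ℂ, (∀ i j, M i j ∈ eisSubring) ∧ (M.det = 1 ∨ M.det = -1) ∧
      !![(a : ℂ), b; conj b, d] = M * Mᴴ := by
  induction a using Nat.strong_induction_on generalizing b d with
  | _ a ih =>
  obtain rfl | ha2 : a = 1 ∨ 2 ≤ a := by omega
  · refine ⟨!![1, 0; conj b, 1], of_fin_two_apply_mem _ (one_mem _) (zero_mem _)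
      (conj_mem_eisSubring hb) (one_mem _), .inl (by simp), ?_⟩
    ext i j
    fin_cases i <;> fin_cases j <;> simp [Matrix.mul_apply]
    linear_combination hdet
  obtain ⟨q, hq, k, hk0, hka, hk⟩ := exists_lt_of_det_eq_one ha2 hb hdet
  obtain ⟨N, hN, hNdet, hNeq⟩ := ih k hka hk0 (b := conj b - conj q * a) (d := a)
    (sub_mem (conj_mem_eisSubring hb) (mul_mem (conj_mem_eisSubring hq) (natCast_mem _ a)))
    (by push_cast; rw [hk]; simp only [map_sub, map_mul, map_natCast, conj_conj]
        linear_combination hdet)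
  refine ⟨!![0, 1; 1, conj q] * N, mul_apply_mem_of_forall_mem _
    (of_fin_two_apply_mem _ (zero_mem _) (one_mem _) (one_mem _) (conj_mem_eisSubring hq)) hN,
    ?_, ?_⟩
  · rw [Matrix.det_mul, Matrix.det_fin_two_of]
    rcases hNdet with h | h <;> simp [h]
  · rw [Matrix.conjTranspose_mul, ← Matrix.mul_assoc, Matrix.mul_assoc _ N, ← hNeq]
    push_cast at hNeq
    rw [hk]
    exact fin_two_eq_mul_mul_conjTranspose (a : ℂ) b d q (by simp)

lemma exists_eq_of_mem_hermEis {A : Matrix (Fin 2) (Fin 2) ℂ} (hA : A ∈ hermEis) :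
    ∃ (a d : ℤ) (b : ℂ), b ∈ eisSubring ∧ A = !![(a : ℂ), b; conj b, d] := by
  obtain ⟨hherm, hent⟩ := hA
  obtain ⟨a, ha⟩ := exists_intCast_eq_of_mem_eisSubring (hent 0 0) (hherm.apply 0 0)
  obtain ⟨d, hd⟩ := exists_intCast_eq_of_mem_eisSubring (hent 1 1) (hherm.apply 1 1)
  refine ⟨a, d, A 0 1, hent 0 1, ?_⟩
  calc A = !![A 0 0, A 0 1; A 1 0, A 1 1] := Matrix.eta_fin_two A
    _ = _ := by rw [ha, hd, ← hherm.apply 1 0]; rfl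

/-- Every `A ∈ h₂(E)` with `det A = 1` and `tr A > 0` is `M M*` for some matrix
`M` over the Eisenstein integers whose determinant is a unit of `E` of absolute
value 1. -/
theorem stmt_15 (A : Matrix (Fin 2) (Fin 2) ℂ) (hA : A ∈ hermEis)
    (hdet : A.det = 1) (htr : 0 < A.trace.re) :
    ∃ M : Matrix (Fin 2) (Fin 2) ℂ, (∀ i j, M i j ∈ eisSet) ∧
      M.det ∈ eisSet ∧ (∃ w ∈ eisSet, M.det * w = 1) ∧
      ‖M.det‖ = 1 ∧ A = M * Mᴴ := by
  obtain ⟨a, d, b, hb, rfl⟩ := exists_eq_of_mem_hermEis hA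
  rw [Matrix.det_fin_two_of] at hdet
  rw [Matrix.trace_fin_two_of] at htr
  have had : (a : ℝ) * d = 1 + normSq b := by
    have : (((a : ℝ) * d : ℝ) : ℂ) = ((1 + normSq b : ℝ) : ℂ) := by
      push_cast
      rw [← mul_conj]
      linear_combination hdet
    exact_mod_cast this
  have ha : 0 < a := by
    have : (0 : ℝ) < a + d := by simpa using htr
    exact_mod_cast (show (0 : ℝ) < a by nlinarith [normSq_nonneg b])
  lift a to ℕ using ha.le
  obtain ⟨M, hM, hMdet, hAM⟩ :=
    exists_eq_mul_conjTranspose_of_det_eq_one (by exact_mod_cast ha) hb (by exact_mod_cast hdet)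
  have hdet_mem : M.det ∈ eisSubring := det_mem_of_forall_mem _ hM
  refine ⟨M, hM, hdet_mem, ⟨M.det, hdet_mem, ?_⟩, ?_, by exact_mod_cast hAM⟩ <;>
    rcases hMdet with h | h <;> simp [h]
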